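/- arXiv:2111.07080 — 3 statements merged into one kernel-verified Lean document; each statement's English description precedes it below -/
import Mathlib

section
/- For every n ∈ ℕ₀, the sum of absolute values of the coefficients c_{n,j} of the normalized probabilists' Hermite polynomial H_n(x) = Σ_{j=0}^n c_{n,j} x^j satisfies Σ_{j=0}^n |c_{n,j}| ≤ 6^{n/2} ≤ 3^n. -/
/-!
The `k`-th coefficient of the monic Hermite polynomial `He_n` is `±(n - k - 1)‼ * C(n, k)` or `0`.
Since `(m - 1)‼ ≤ m‼` and `(m - 1)‼ * m‼ = m!`, its square is at most `(n - k)! * C(n, k)² ≤ n! * C(n, k)`,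
so the `k`-th normalized coefficient is at most `√C(n, k)`. By Cauchy–Schwarz the sum of these is at
most `√((n + 1) * 2 ^ n) ≤ √(6 ^ n)`, and `√6 ≤ 3`.
-/

open Nat Polynomial Finset

theorem Nat.doubleFactorial_le_doubleFactorial_succ : ∀ n : ℕ, n‼ ≤ (n + 1)‼
  | 0 => le_rfl
  | 1 => by decide
  | n + 2 => by
    rw [doubleFactorial_add_two, doubleFactorial_add_two]
    exact Nat.mul_le_mul (by omega) (doubleFactorial_le_doubleFactorial_succ n)

theorem Nat.sq_doubleFactorial_pred_le_factorial : ∀ m : ℕ, ((m - 1)‼) ^ 2 ≤ m !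
  | 0 => le_rfl
  | m + 1 => by
    rw [sq, factorial_eq_mul_doubleFactorial, Nat.add_sub_cancel]
    exact Nat.mul_le_mul_right _ (doubleFactorial_le_doubleFactorial_succ m)

theorem Nat.sq_doubleFactorial_mul_choose_le_factorial (n k : ℕ) :
    ((n - k - 1)‼) ^ 2 * n.choose k ≤ n ! := by
  rcases le_or_gt k n with hkn | hnk
  · calc ((n - k - 1)‼) ^ 2 * n.choose k ≤ (n - k)! * n.choose k :=
          Nat.mul_le_mul_right _ (sq_doubleFactorial_pred_le_factorial _)
      _ ≤ n.choose k * k ! * (n - k)! := by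
          rw [mul_comm, mul_right_comm]
          exact Nat.le_mul_of_pos_right _ k.factorial_pos
      _ = n ! := choose_mul_factorial_mul_factorial hkn
  · simp [choose_eq_zero_of_lt hnk]

theorem Polynomial.sq_coeff_hermite_le (n k : ℕ) :
    (hermite n).coeff k ^ 2 ≤ n ! * n.choose k := by
  rw [coeff_hermite]
  split_ifs
  · calc ((-1 : ℤ) ^ ((n - k) / 2) * (n - k - 1)‼ * n.choose k) ^ 2
        = (((n - k - 1)‼ ^ 2 * n.choose k : ℕ) : ℤ) * n.choose k := by
          push_cast
          rw [mul_pow, mul_pow, ← pow_mul, (even_two.mul_left _).neg_one_pow]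
          ring
      _ ≤ n ! * n.choose k := by
          gcongr; exact_mod_cast sq_doubleFactorial_mul_choose_le_factorial n k
  · positivity

theorem Polynomial.abs_coeff_hermite_div_sqrt_factorial_le (n k : ℕ) :
    |((hermite n).coeff k : ℝ)| / √(n ! : ℝ) ≤ √(n.choose k : ℝ) := by
  rw [div_le_iff₀ (by positivity), ← Real.sqrt_mul (by positivity), mul_comm]
  exact Real.abs_le_sqrt (by exact_mod_cast sq_coeff_hermite_le n k)

theorem Nat.sum_range_sqrt_choose_le (n : ℕ) :
    ∑ k ∈ range (n + 1), √(n.choose k : ℝ) ≤ √((n + 1) * 2 ^ n) := by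
  simpa [Real.sqrt_mul, ← Nat.cast_sum, Nat.sum_range_choose] using
    Real.sum_sqrt_mul_sqrt_le (range (n + 1)) (f := fun _ ↦ (1 : ℝ)) (g := fun k ↦ (n.choose k : ℝ))
      (fun _ ↦ zero_le_one) (fun _ ↦ Nat.cast_nonneg _)

theorem Nat.add_one_mul_two_pow_le_six_pow (n : ℕ) : (n + 1) * 2 ^ n ≤ 6 ^ n :=
  calc (n + 1) * 2 ^ n ≤ 3 ^ n * 2 ^ n := Nat.mul_le_mul_right _ (Nat.lt_pow_self (by norm_num))
    _ = 6 ^ n := (mul_pow 3 2 n).symm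

/-- For every `n`, the coefficients `c_{n,j}` of the normalized probabilists' Hermite
polynomial `H_n(x) = Σ_{j=0}^n c_{n,j} x^j` (i.e. `c_{n,j} = (hermite n).coeff j / √(n!)`)
satisfy `Σ_{j=0}^n |c_{n,j}| ≤ 6^{n/2} ≤ 3^n`. -/
theorem hermite_coeff_abs_sum_le (n : ℕ) :
    ∑ j ∈ Finset.range (n + 1),
        |((Polynomial.hermite n).coeff j : ℝ)| / Real.sqrt (n.factorial : ℝ)
      ≤ 6 ^ ((n : ℝ) / 2) ∧ (6 : ℝ) ^ ((n : ℝ) / 2) ≤ 3 ^ n := by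
  rw [Real.rpow_div_two_eq_sqrt _ (by norm_num), Real.rpow_natCast]
  constructor
  · calc ∑ j ∈ range (n + 1), |((hermite n).coeff j : ℝ)| / √(n ! : ℝ)
        ≤ ∑ j ∈ range (n + 1), √(n.choose j : ℝ) :=
          sum_le_sum fun j _ ↦ abs_coeff_hermite_div_sqrt_factorial_le n j
      _ ≤ √((n + 1) * 2 ^ n) := Nat.sum_range_sqrt_choose_le n
      _ ≤ √(6 ^ n) := Real.sqrt_le_sqrt (by exact_mod_cast add_one_mul_two_pow_le_six_pow n)
      _ = √6 ^ n := by
          rw [Real.sqrt_eq_iff_eq_sq (by positivity) (by positivity), ← pow_mul, mul_comm, pow_mul,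
            Real.sq_sqrt (by norm_num)]
  · gcongr
    rw [Real.sqrt_le_left (by norm_num)]
    norm_num
end

section
/- For every n ∈ ℕ₀ and every x ∈ ℝ, the normalized probabilists' Hermite polynomial satisfies |H_n(x)| ≤ (3 max{1, |x|})^n. -/
open Polynomial

lemma hermite_deriv (n : ℕ) :
    derivative (hermite (n+1)) = (n+1 : ℤ[X]) * hermite n := by
  induction n with
  | zero => simp [hermite_one, hermite_zero]
  | succ n ih =>
    rw [hermite_succ (n+1), derivative_sub, derivative_mul, derivative_X, ih,
      derivative_mul]
    have hD : derivative (hermite n) = X * hermite n - hermite (n+1) := by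
      rw [hermite_succ n]; ring
    rw [hD]
    simp
    ring

lemma hermite_rec (n : ℕ) (x : ℝ) :
    aeval x (hermite (n+2)) =
      x * aeval x (hermite (n+1)) - (n+1 : ℝ) * aeval x (hermite n) := by
  rw [hermite_succ (n+1), hermite_deriv n]
  simp

lemma aeval_hermite_bound (n : ℕ) (x : ℝ) :
    |aeval x (hermite n)| ≤ Real.sqrt n.factorial * (3 * max 1 |x|) ^ n := by
  set m := max 1 |x| with hm
  have hm1 : (1:ℝ) ≤ m := le_max_left _ _
  have hxm : |x| ≤ m := le_max_right _ _
  have hm0 : (0:ℝ) ≤ m := by linarith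
  induction n using Nat.strong_induction_on with
  | _ n ih =>
    match n with
    | 0 => simp
    | 1 =>
      simp [hermite_one]
      calc |x| ≤ m := hxm
        _ ≤ 3 * m := by linarith
    | (n+2) =>
      have h1 := ih (n+1) (by omega)
      have h0 := ih n (by omega)
      rw [hermite_rec n x]
      have key : |x * aeval x (hermite (n+1)) - (n+1 : ℝ) * aeval x (hermite n)|
          ≤ |x| * |aeval x (hermite (n+1))| + (n+1:ℝ) * |aeval x (hermite n)| := by
        calc _ ≤ |x * aeval x (hermite (n+1))| + |(n+1 : ℝ) * aeval x (hermite n)| :=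
              abs_sub _ _
          _ = _ := by rw [abs_mul, abs_mul, abs_of_nonneg (by positivity : (0:ℝ) ≤ (n+1:ℝ))]
      refine key.trans ?_
      have fact1 : Real.sqrt (n+1).factorial ≤ Real.sqrt (n+2).factorial := by
        apply Real.sqrt_le_sqrt
        exact_mod_cast Nat.factorial_le (by omega)
      have fact0 : (n+1:ℝ) * Real.sqrt n.factorial ≤ Real.sqrt (n+2).factorial := by
        have h1 : (n+1:ℝ) * Real.sqrt n.factorial = Real.sqrt ((n+1)^2 * n.factorial) := by
          rw [Real.sqrt_mul (by positivity), Real.sqrt_sq (by positivity)]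
        rw [h1]
        apply Real.sqrt_le_sqrt
        have : ((n+1)^2 * n.factorial : ℕ) ≤ (n+2).factorial := by
          rw [Nat.factorial_succ, Nat.factorial_succ]
          nlinarith [Nat.one_le_iff_ne_zero.2 (Nat.factorial_ne_zero n)]
        exact_mod_cast this
      have p1 : (0:ℝ) ≤ (3*m)^n := by positivity
      have pX1 : (0:ℝ) ≤ (3*m)^(n+1) := by positivity
      calc |x| * |aeval x (hermite (n+1))| + (n+1:ℝ) * |aeval x (hermite n)|
          ≤ m * (Real.sqrt (n+1).factorial * (3*m)^(n+1))
            + (n+1:ℝ) * (Real.sqrt n.factorial * (3*m)^n) := by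
            have A := mul_le_mul hxm h1 (abs_nonneg _) hm0
            have B := mul_le_mul_of_nonneg_left h0 (by positivity : (0:ℝ) ≤ (n+1:ℝ))
            linarith
        _ ≤ Real.sqrt (n+2).factorial * (m * (3*m)^(n+1))
            + Real.sqrt (n+2).factorial * (3*m)^n := by
            have A : m * (Real.sqrt (n+1).factorial * (3*m)^(n+1))
                ≤ Real.sqrt (n+2).factorial * (m * (3*m)^(n+1)) := by
              nlinarith [mul_le_mul_of_nonneg_left fact1 (mul_nonneg hm0 pX1)]
            have B : (n+1:ℝ) * (Real.sqrt n.factorial * (3*m)^n)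
                ≤ Real.sqrt (n+2).factorial * (3*m)^n := by
              nlinarith [mul_le_mul_of_nonneg_right fact0 p1]
            linarith
        _ ≤ Real.sqrt (n+2).factorial * (3*m)^(n+2) := by
            have hsn : (0:ℝ) ≤ Real.sqrt (n+2).factorial := Real.sqrt_nonneg _
            have hmm : (1:ℝ) ≤ m^2 := by nlinarith
            have ha : (3*m)^n ≤ m^2 * (3*m)^n := by nlinarith
            have hexp : (3*m)^(n+2) = 9 * m^2 * (3*m)^n := by ring
            rw [← mul_add]
            apply mul_le_mul_of_nonneg_left _ hsn
            rw [hexp, pow_succ]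
            nlinarith [mul_nonneg (mul_nonneg hm0 hm0) p1]

/-- The `n`-th probabilists' Hermite polynomial normalized in `L²(ℝ,γ₁)`:
`H_n(x) = ((-1)^n/√(n!)) e^{x²/2} (d^n/dx^n) e^{-x²/2}`. -/
noncomputable def HermitePoly (n : ℕ) (x : ℝ) : ℝ :=
  ((-1 : ℝ) ^ n / Real.sqrt (n.factorial : ℝ)) * Real.exp (x ^ 2 / 2) *
    iteratedDeriv n (fun t : ℝ => Real.exp (-t ^ 2 / 2)) x

/-- For every `n ∈ ℕ₀` and `x ∈ ℝ`, `|H_n(x)| ≤ (3 max{1, |x|})^n`. -/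
theorem abs_hermitePoly_le (n : ℕ) (x : ℝ) :
    |HermitePoly n x| ≤ (3 * max 1 |x|) ^ n := by
  have hsp : (0:ℝ) < Real.sqrt n.factorial := by
    apply Real.sqrt_pos.2
    exact_mod_cast Nat.factorial_pos n
  have hf : (fun t : ℝ => Real.exp (-t^2/2)) = fun y : ℝ => Real.exp (-(y^2/2)) := by
    funext t; ring_nf
  have key : HermitePoly n x = aeval x (hermite n) / Real.sqrt n.factorial := by
    unfold HermitePoly
    rw [hf, iteratedDeriv_eq_iterate, Polynomial.deriv_gaussian_eq_hermite_mul_gaussian]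
    have h2 : ((-1:ℝ)^n)^2 = 1 := by
      rw [← pow_mul, mul_comm, pow_mul]; norm_num
    have h3 : Real.exp (x^2/2) * Real.exp (-(x^2/2)) = 1 := by
      rw [← Real.exp_add]; ring_nf; exact Real.exp_zero
    calc (-1:ℝ)^n / Real.sqrt n.factorial * Real.exp (x^2/2)
          * ((-1)^n * aeval x (hermite n) * Real.exp (-(x^2/2)))
        = ((-1:ℝ)^n)^2 * (Real.exp (x^2/2) * Real.exp (-(x^2/2)))
          * aeval x (hermite n) / Real.sqrt n.factorial := by ring
      _ = _ := by rw [h2, h3]; ring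
  rw [key, abs_div, abs_of_nonneg hsp.le, div_le_iff₀ hsp]
  have := aeval_hermite_bound n x
  linarith
end

section
/- Let M ≥ 2, n ∈ ℕ, ε ∈ (0, e^{-1}) and set M(n,ε) := √(24(n log(2n) − log ε)). Then √((2n)!!) · (3M(n,ε))^n · e^{-M(n,ε)²/4} ≤ ε. -/
open Nat

lemma doubleFactorial_le_pow_self (n : ℕ) : (2 * n)‼ ≤ (2 * n) ^ n := by
  induction n with
  | zero => simp
  | succ k ih =>
    have h : 2 * (k + 1) = 2 * k + 2 := by ring
    rw [h, Nat.doubleFactorial]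
    calc (2 * k + 2) * (2 * k)‼ ≤ (2 * k + 2) * (2 * k) ^ k :=
          Nat.mul_le_mul_left _ ih
      _ ≤ (2 * k + 2) * (2 * k + 2) ^ k :=
          Nat.mul_le_mul_left _ (Nat.pow_le_pow_left (by omega) k)
      _ = (2 * k + 2) ^ (k + 1) := by rw [pow_succ]; ring

/-- For `n ∈ ℕ`, `n ≥ 1`, `ε ∈ (0, e^{-1})` and
`M(n,ε) := √(24(n log(2n) − log ε))`, it holds
`√((2n)‼) · (3 M(n,ε))^n · e^{-M(n,ε)²/4} ≤ ε`. -/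
theorem hermite_truncation_error_le (n : ℕ) (hn : 1 ≤ n) (ε : ℝ)
    (hε : ε ∈ Set.Ioo 0 (Real.exp (-1))) :
    Real.sqrt ((2 * n)‼ : ℝ) *
        (3 * Real.sqrt (24 * ((n : ℝ) * Real.log (2 * n) - Real.log ε))) ^ n *
        Real.exp (-(Real.sqrt (24 * ((n : ℝ) * Real.log (2 * n) - Real.log ε))) ^ 2 / 4)
      ≤ ε := by
  obtain ⟨hε0, hε1⟩ := hε
  have hn1 : (1:ℝ) ≤ (n:ℝ) := by exact_mod_cast hn
  set L : ℝ := Real.log (2 * (n:ℝ)) with hLdef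
  set t : ℝ := -Real.log ε with htdef
  have hlog2 : (0.6:ℝ) < Real.log 2 := by
    have := Real.log_two_gt_d9; linarith
  have hL2 : Real.log 2 ≤ L := by
    apply Real.log_le_log (by norm_num); linarith
  have hL0 : 0 < L := by linarith
  have ht1 : 1 ≤ t := by
    have h := Real.log_lt_log hε0 hε1
    rw [Real.log_exp] at h
    rw [htdef]; linarith
  set A : ℝ := (n:ℝ) * L + t with hAdef
  have hnL : Real.log 2 ≤ (n:ℝ) * L := le_trans hL2 (le_mul_of_one_le_left hL0.le hn1)
  have hnL0 : 0 < (n:ℝ) * L := by linarith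
  have hA0 : 0 < A := by linarith
  have heq : (n : ℝ) * Real.log (2 * n) - Real.log ε = A := by
    rw [hAdef, htdef, hLdef]; ring
  rw [heq]
  have hsqA : Real.sqrt (24 * A) ^ 2 = 24 * A := Real.sq_sqrt (by positivity)
  have hM0 : 0 < Real.sqrt (24 * A) := Real.sqrt_pos.mpr (by positivity)
  -- Step 1: double factorial bound
  have hstep1 : Real.sqrt ((2 * n)‼ : ℝ) ≤ (2 * (n:ℝ)) ^ n := by
    rw [show (2 * (n:ℝ)) ^ n = Real.sqrt (((2 * (n:ℝ)) ^ n) ^ 2) from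
      (Real.sqrt_sq (by positivity)).symm]
    apply Real.sqrt_le_sqrt
    have hnat : ((2 * n)‼ : ℕ) ≤ ((2 * n) ^ n) ^ 2 := by
      calc ((2*n)‼) ≤ (2*n)^n := doubleFactorial_le_pow_self n
        _ ≤ ((2*n)^n)^2 := Nat.le_self_pow (by norm_num) _
    calc ((2 * n)‼ : ℝ) ≤ ((((2*n : ℕ))^n : ℕ) : ℝ)^2 := by exact_mod_cast hnat
      _ = ((2 * (n:ℝ)) ^ n) ^ 2 := by push_cast; ring
  have hpow1 : (2 * (n:ℝ)) ^ n = Real.exp ((n:ℝ) * L) := by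
    rw [hLdef, Real.exp_nat_mul, Real.exp_log (by linarith)]
  set B : ℝ := Real.log (3 * Real.sqrt (24 * A)) with hBdef
  have hpow2 : (3 * Real.sqrt (24 * A)) ^ n = Real.exp ((n:ℝ) * B) := by
    rw [hBdef, Real.exp_nat_mul, Real.exp_log (by positivity)]
  have hexp : Real.exp (-(Real.sqrt (24 * A)) ^ 2 / 4) = Real.exp (-(6 * A)) := by
    rw [show -(Real.sqrt (24 * A)) ^ 2 / 4 = -(Real.sqrt (24*A) ^ 2) / 4 by ring, hsqA]
    ring_nf
  rw [hpow2, hexp]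
  have hLHS : Real.sqrt ((2 * n)‼ : ℝ) * Real.exp ((n:ℝ)*B) * Real.exp (-(6*A))
      ≤ Real.exp ((n:ℝ)*L) * Real.exp ((n:ℝ)*B) * Real.exp (-(6*A)) := by
    gcongr
    rw [← hpow1]; exact hstep1
  refine le_trans hLHS ?_
  rw [← Real.exp_add, ← Real.exp_add,
    show ε = Real.exp (Real.log ε) from (Real.exp_log hε0).symm]
  apply Real.exp_le_exp.mpr
  have hlogε : Real.log ε = -t := by rw [htdef]; ring
  rw [hlogε]
  -- Core inequality: n*L + n*B - 6*A ≤ -t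
  have hB : B = Real.log 3 + (Real.log 24 + Real.log A) / 2 := by
    rw [hBdef, Real.log_mul (by norm_num) (ne_of_gt hM0),
        Real.log_sqrt (by positivity), Real.log_mul (by norm_num) (ne_of_gt hA0)]
  have ht0 : (0:ℝ) < t := by linarith
  have hdiv0 : 0 < t / ((n:ℝ) * L) := div_pos ht0 hnL0
  have hlogA : Real.log A ≤ 2 * L + t / ((n:ℝ) * L) := by
    have h1 : A = ((n:ℝ) * L) * (1 + t / ((n:ℝ)*L)) := by
      rw [hAdef]; field_simp
    have h2 : Real.log A = Real.log ((n:ℝ)*L) + Real.log (1 + t/((n:ℝ)*L)) := by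
      rw [h1, Real.log_mul (ne_of_gt hnL0) (by linarith)]
    have h3 : Real.log (1 + t/((n:ℝ)*L)) ≤ t/((n:ℝ)*L) := by
      have := Real.log_le_sub_one_of_pos (show (0:ℝ) < 1 + t/((n:ℝ)*L) by linarith)
      linarith
    have h4 : Real.log ((n:ℝ)*L) ≤ 2 * L := by
      rw [Real.log_mul (by positivity) (ne_of_gt hL0)]
      have h5 : Real.log (n:ℝ) ≤ L := by
        rw [hLdef]; exact Real.log_le_log (by linarith) (by linarith)
      have h6 : Real.log L ≤ L := by
        have := Real.log_le_sub_one_of_pos hL0; linarith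
      linarith
    linarith [h2.le, h3, h4]
  have hnum : 2 * Real.log 3 + Real.log 24 ≤ 8 * Real.log 2 := by
    have h216 : (2:ℝ) * Real.log 3 + Real.log 24 = Real.log 216 := by
      rw [show (216:ℝ) = 3^2 * 24 by norm_num,
        Real.log_mul (by norm_num) (by norm_num), Real.log_pow]
      push_cast; ring
    have h256 : (8:ℝ) * Real.log 2 = Real.log 256 := by
      rw [show (256:ℝ) = 2^8 by norm_num, Real.log_pow]; push_cast; ring
    rw [h216, h256]
    exact Real.log_le_log (by norm_num) (by norm_num)
  have hmul1 : (n:ℝ)/2 * Real.log A ≤ (n:ℝ)/2 * (2*L + t/((n:ℝ)*L)) :=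
    mul_le_mul_of_nonneg_left hlogA (by positivity)
  have hsimp : (n:ℝ)/2 * (t/((n:ℝ)*L)) = t/(2*L) := by
    field_simp
  have hdivt : t/(2*L) ≤ t := div_le_self ht0.le (by linarith)
  have hmul2 : (n:ℝ)/2 * (2*Real.log 3 + Real.log 24) ≤ (n:ℝ)/2 * (8*Real.log 2) :=
    mul_le_mul_of_nonneg_left hnum (by positivity)
  have hmul3 : (n:ℝ) * Real.log 2 ≤ (n:ℝ) * L :=
    mul_le_mul_of_nonneg_left hL2 (by positivity)
  have hnB : (n:ℝ) * B = (n:ℝ) * Real.log 3 + (n:ℝ)/2 * Real.log 24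
      + (n:ℝ)/2 * Real.log A := by
    rw [hB]; ring
  linarith [hmul1, hsimp, hdivt, hmul2, hmul3, hnB, ht1, hnL0]
end
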